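/- arXiv:2109.09088 — 6 statements merged into one kernel-verified Lean document; each statement's English description precedes it below -/
import Mathlib

section
/- Let r ≥ 2, Φ : Fin r × Fin r → ℝ, and h : Fin r → ℝ with h_i ≥ 0 and ∑_i h_i = 1. If Φ_{ii} < 0 for all i, and (2/(r-1))Φ_{ii} + Φ_{ij} + Φ_{ji} < 0 for all i ≠ j, then ∑_{i=1}^r ∑_{j=1}^r h_i h_j Φ_{ij} < 0. -/
private lemma pair_nonpos (a b u v s : ℝ) (ha : 0 ≤ a) (hb : 0 ≤ b)
    (hu : u < 0) (hv : v < 0) (hsu : s + 2*u < 0) (hsv : s + 2*v < 0) :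
    a*b*s + a^2*u + b^2*v ≤ 0 := by
  rcases le_total u v with huv | huv
  · nlinarith [mul_nonneg ha hb, sq_nonneg (a-b), mul_nonneg (sq_nonneg a) (sub_nonneg.2 huv),
      mul_nonpos_of_nonneg_of_nonpos (mul_nonneg ha hb) (le_of_lt hsv)]
  · nlinarith [mul_nonneg ha hb, sq_nonneg (a-b), mul_nonneg (sq_nonneg b) (sub_nonneg.2 huv),
      mul_nonpos_of_nonneg_of_nonpos (mul_nonneg ha hb) (le_of_lt hsu)]

private lemma pair_neg (a b u v s : ℝ) (ha : 0 < a) (hb : 0 ≤ b)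
    (hu : u < 0) (hv : v < 0) (hsu : s + 2*u < 0) (hsv : s + 2*v < 0) :
    a*b*s + a^2*u + b^2*v < 0 := by
  rcases eq_or_lt_of_le hb with rfl | hb'
  · have : a^2*u < 0 := mul_neg_of_pos_of_neg (by positivity) hu
    nlinarith
  · rcases le_total u v with huv | huv
    · nlinarith [mul_pos ha hb', sq_nonneg (a-b), mul_nonneg (sq_nonneg a) (sub_nonneg.2 huv)]
    · nlinarith [mul_pos ha hb', sq_nonneg (a-b), mul_nonneg (sq_nonneg b) (sub_nonneg.2 huv)]

theorem tuan_relaxation {r : ℕ} (hr : 2 ≤ r) (Φ : Fin r × Fin r → ℝ)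
    (h : Fin r → ℝ) (hpos : ∀ i, 0 ≤ h i) (hsum : ∑ i, h i = 1)
    (hdiag : ∀ i, Φ (i, i) < 0)
    (hoff : ∀ i j, i ≠ j → (2 / ((r : ℝ) - 1)) * Φ (i, i) + Φ (i, j) + Φ (j, i) < 0) :
    ∑ i : Fin r, ∑ j : Fin r, h i * h j * Φ (i, j) < 0 := by
  have hr2 : (2:ℝ) ≤ (r:ℝ) := by exact_mod_cast hr
  have hr1 : (0:ℝ) < (r:ℝ) - 1 := by linarith
  set Q : Fin r → Fin r → ℝ := fun i j =>
    h i * h j * (((r:ℝ)-1) * (Φ (i,j) + Φ (j,i))) + (h i)^2 * Φ (i,i) + (h j)^2 * Φ (j,j)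
    with hQ
  -- the off-diagonal condition, cleared of denominators
  have hcond : ∀ i j, i ≠ j →
      ((r:ℝ)-1) * (Φ (i,j) + Φ (j,i)) + 2 * Φ (i,i) < 0 := by
    intro i j hij
    have h0 := hoff i j hij
    have h1 : ((r:ℝ)-1) * ((2 / ((r:ℝ) - 1)) * Φ (i,i) + Φ (i,j) + Φ (j,i)) < 0 :=
      mul_neg_of_pos_of_neg hr1 h0
    have h2 : ((r:ℝ)-1) * ((2 / ((r:ℝ) - 1)) * Φ (i,i) + Φ (i,j) + Φ (j,i))
        = ((r:ℝ)-1) * (Φ (i,j) + Φ (j,i)) + 2 * Φ (i,i) := by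
      field_simp
      ring
    linarith [h2 ▸ h1]
  have hQle : ∀ i j, i ≠ j → Q i j ≤ 0 := by
    intro i j hij
    have c1 := hcond i j hij
    have c2 := hcond j i hij.symm
    exact pair_nonpos (h i) (h j) (Φ (i,i)) (Φ (j,j)) _ (hpos i) (hpos j)
      (hdiag i) (hdiag j) (by linarith) (by linarith [c2]; )
  have hQlt : ∀ i j, i ≠ j → 0 < h i → Q i j < 0 := by
    intro i j hij hi
    have c1 := hcond i j hij
    have c2 := hcond j i hij.symm
    exact pair_neg (h i) (h j) (Φ (i,i)) (Φ (j,j)) _ hi (hpos j)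
      (hdiag i) (hdiag j) (by linarith) (by linarith)
  -- the key algebraic identity
  set S : ℝ := ∑ i : Fin r, ∑ j : Fin r, h i * h j * Φ (i, j) with hS
  set D : ℝ := ∑ i : Fin r, (h i)^2 * Φ (i,i) with hD
  have hswap : ∑ i : Fin r, ∑ j : Fin r, h i * h j * Φ (j, i) = S := by
    rw [Finset.sum_comm]
    refine Finset.sum_congr rfl fun i _ => Finset.sum_congr rfl fun j _ => by ring
  have e2 : ∑ i : Fin r, ∑ j : Fin r, Q i j = 2*((r:ℝ)-1) * S + 2*(r:ℝ)*D := by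
    have split : ∑ i : Fin r, ∑ j : Fin r, Q i j
        = ((r:ℝ)-1) * (∑ i : Fin r, ∑ j : Fin r, h i * h j * Φ (i,j))
          + ((r:ℝ)-1) * (∑ i : Fin r, ∑ j : Fin r, h i * h j * Φ (j,i))
          + (∑ i : Fin r, ∑ _j : Fin r, (h i)^2 * Φ (i,i))
          + (∑ i : Fin r, ∑ j : Fin r, (h j)^2 * Φ (j,j)) := by
      rw [Finset.mul_sum, Finset.mul_sum, ← Finset.sum_add_distrib, ← Finset.sum_add_distrib,
        ← Finset.sum_add_distrib]
      refine Finset.sum_congr rfl fun i _ => ?_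
      rw [Finset.mul_sum, Finset.mul_sum, ← Finset.sum_add_distrib, ← Finset.sum_add_distrib,
        ← Finset.sum_add_distrib]
      refine Finset.sum_congr rfl fun j _ => ?_
      simp only [hQ]
      ring
    have c1 : ∑ i : Fin r, ∑ _j : Fin r, (h i)^2 * Φ (i,i) = (r:ℝ) * D := by
      simp [Finset.sum_const, Finset.card_univ, hD, Finset.mul_sum, mul_comm, mul_left_comm]
    have c2 : ∑ _i : Fin r, ∑ j : Fin r, (h j)^2 * Φ (j,j) = (r:ℝ) * D := by
      simp [Finset.sum_const, Finset.card_univ, hD]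
    rw [split, hswap, c1, c2, ← hS]
    ring
  have e3 : ∑ i : Fin r, Q i i = 2*(r:ℝ)*D := by
    have : ∀ i : Fin r, Q i i = 2*(r:ℝ)*((h i)^2 * Φ (i,i)) := by
      intro i; simp only [hQ]; ring
    rw [Finset.sum_congr rfl fun i _ => this i, ← Finset.mul_sum, hD]
  have hident : ∑ i : Fin r, ∑ j ∈ Finset.univ.erase i, Q i j = 2*((r:ℝ)-1) * S := by
    have e1 : ∀ i : Fin r, ∑ j ∈ Finset.univ.erase i, Q i j
        = (∑ j : Fin r, Q i j) - Q i i :=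
      fun i => Finset.sum_erase_eq_sub (Finset.mem_univ i)
    rw [Finset.sum_congr rfl fun i _ => e1 i, Finset.sum_sub_distrib, e2, e3]
    ring
  -- a strictly positive coordinate
  obtain ⟨k, hk⟩ : ∃ k, 0 < h k := by
    by_contra hc
    push_neg at hc
    have : ∑ i, h i ≤ 0 := Finset.sum_nonpos fun i _ => hc i
    linarith [hsum ▸ this]
  obtain ⟨l, -, hl⟩ : ∃ l ∈ (Finset.univ : Finset (Fin r)), l ≠ k := by
    apply Finset.exists_mem_ne
    · simpa using by omega
  have hlt : ∑ i : Fin r, ∑ j ∈ Finset.univ.erase i, Q i j < 0 := by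
    have : ∑ i : Fin r, ∑ j ∈ Finset.univ.erase i, Q i j
        < ∑ _i : Fin r, (0:ℝ) := by
      apply Finset.sum_lt_sum
      · intro i _
        exact Finset.sum_nonpos fun j hj =>
          hQle i j (fun e => (Finset.mem_erase.1 hj).1 e.symm)
      · refine ⟨k, Finset.mem_univ k, ?_⟩
        have hlk : l ∈ Finset.univ.erase k := Finset.mem_erase.2 ⟨hl, Finset.mem_univ l⟩
        calc ∑ j ∈ Finset.univ.erase k, Q k j
            < ∑ _j ∈ Finset.univ.erase k, (0:ℝ) := by
              apply Finset.sum_lt_sum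
              · intro j hj
                exact hQle k j (fun e => (Finset.mem_erase.1 hj).1 e.symm)
              · exact ⟨l, hlk, hQlt k l (fun e => hl e.symm) hk⟩
          _ = 0 := Finset.sum_const_zero
    simpa using this
  nlinarith [hident ▸ hlt, hr1]
end

section
/- Let r ≥ 2, Φ : Fin r × Fin r → ℝ, and h : Fin r → ℝ with h_i ≥ 0 and ∑_i h_i = 1. Suppose that for every i ∈ {1,…,r} and every subset S ⊆ {1,…,r}\{i}, one has Φ_{ii} + (1/2)∑_{j∈S}(Φ_{ij} + Φ_{ji}) < 0. Then ∑_{i=1}^r ∑_{j=1}^r h_i h_j Φ_{ij} < 0. -/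
/-!
Only the symmetric part `Ψ = (Φ + Φᵀ)/2` enters the quadratic form. For `i ≠ j`, nonnegative
weights give `h_i h_j Ψ_ij ≤ h_i h_j Ψ⁺_ij ≤ (h_i² + h_j²)/2 · Ψ⁺_ij`, and by symmetry the
off-diagonal part of the form is at most `∑_i h_i² ∑_{j ≠ i} Ψ⁺_ij`. Hence the form is bounded by
`∑_i h_i² (Φ_ii + ∑_{j ≠ i} Ψ⁺_ij)`, and each bracket is the hypothesis for the set
`S = {j ≠ i | Ψ_ij > 0}`, so it is negative; as `∑ h_i = 1`, some `h_i² > 0`.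
-/

open Finset

namespace SymmetrizedForm

variable {ι : Type*}

noncomputable def symmPart (A : ι → ι → ℝ) (i j : ι) : ℝ := (A i j + A j i) / 2

theorem symmPart_symm (A : ι → ι → ℝ) (i j : ι) : symmPart A i j = symmPart A j i := by
  simp only [symmPart, add_comm]

theorem sum_sum_mul_symmPart [Fintype ι] (A : ι → ι → ℝ) (h : ι → ℝ) :
    ∑ i, ∑ j, h i * h j * symmPart A i j = ∑ i, ∑ j, h i * h j * A i j := by
  have hswap : ∑ i, ∑ j, h i * h j * A j i = ∑ i, ∑ j, h i * h j * A i j := by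
    rw [sum_comm]
    exact sum_congr rfl fun i _ => sum_congr rfl fun j _ => by ring
  calc ∑ i, ∑ j, h i * h j * symmPart A i j
      = ((∑ i, ∑ j, h i * h j * A i j) + ∑ i, ∑ j, h i * h j * A j i) / 2 := by
        simp only [symmPart, ← sum_add_distrib, sum_div]
        exact sum_congr rfl fun i _ => sum_congr rfl fun j _ => by ring
    _ = ∑ i, ∑ j, h i * h j * A i j := by rw [hswap]; ring

theorem sum_sum_avg_mul_of_symm [Fintype ι] {B : ι → ι → ℝ} (hB : ∀ i j, B i j = B j i)
    (f : ι → ℝ) :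
    ∑ i, ∑ j, (f i + f j) / 2 * B i j = ∑ i, ∑ j, f i * B i j := by
  have hswap : ∑ i, ∑ j, f j * B i j = ∑ i, ∑ j, f i * B i j := by
    rw [sum_comm]
    exact sum_congr rfl fun i _ => sum_congr rfl fun j _ => by rw [hB]
  calc ∑ i, ∑ j, (f i + f j) / 2 * B i j
      = ((∑ i, ∑ j, f i * B i j) + ∑ i, ∑ j, f j * B i j) / 2 := by
        simp only [← sum_add_distrib, sum_div]
        exact sum_congr rfl fun i _ => sum_congr rfl fun j _ => by ring
    _ = ∑ i, ∑ j, f i * B i j := by rw [hswap]; ring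

def posOffDiag [DecidableEq ι] (A : ι → ι → ℝ) (i j : ι) : ℝ :=
  if i = j then 0 else max (A i j) 0

theorem posOffDiag_symm [DecidableEq ι] {A : ι → ι → ℝ} (hA : ∀ i j, A i j = A j i) (i j : ι) :
    posOffDiag A i j = posOffDiag A j i := by
  simp only [posOffDiag, eq_comm, hA i j]

theorem mul_mul_le_diag_add_posOffDiag [DecidableEq ι] (A : ι → ι → ℝ) {h : ι → ℝ}
    (hh : ∀ i, 0 ≤ h i) (i j : ι) :
    h i * h j * A i j
      ≤ (if i = j then h i ^ 2 * A i i else 0) + (h i ^ 2 + h j ^ 2) / 2 * posOffDiag A i j := by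
  by_cases hij : i = j
  · subst hij
    simp [posOffDiag, sq]
  · have hamgm : h i * h j ≤ (h i ^ 2 + h j ^ 2) / 2 := by nlinarith [sq_nonneg (h i - h j)]
    simp only [posOffDiag, if_neg hij, zero_add]
    calc h i * h j * A i j ≤ h i * h j * max (A i j) 0 :=
          mul_le_mul_of_nonneg_left (le_max_left _ _) (mul_nonneg (hh i) (hh j))
      _ ≤ (h i ^ 2 + h j ^ 2) / 2 * max (A i j) 0 :=
          mul_le_mul_of_nonneg_right hamgm (le_max_right _ _)

theorem sum_sum_mul_le_of_symm [Fintype ι] [DecidableEq ι] {A : ι → ι → ℝ}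
    (hA : ∀ i j, A i j = A j i) {h : ι → ℝ} (hh : ∀ i, 0 ≤ h i) :
    ∑ i, ∑ j, h i * h j * A i j ≤ ∑ i, h i ^ 2 * (A i i + ∑ j, posOffDiag A i j) := by
  calc ∑ i, ∑ j, h i * h j * A i j
      ≤ ∑ i, ∑ j, ((if i = j then h i ^ 2 * A i i else 0)
          + (h i ^ 2 + h j ^ 2) / 2 * posOffDiag A i j) :=
        sum_le_sum fun i _ => sum_le_sum fun j _ => mul_mul_le_diag_add_posOffDiag A hh i j
    _ = ∑ i, h i ^ 2 * A i i + ∑ i, ∑ j, h i ^ 2 * posOffDiag A i j := by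
        simp only [sum_add_distrib, sum_ite_eq, mem_univ, if_true,
          sum_sum_avg_mul_of_symm (posOffDiag_symm hA)]
    _ = ∑ i, h i ^ 2 * (A i i + ∑ j, posOffDiag A i j) := by
        simp only [mul_add, mul_sum, sum_add_distrib]

theorem sum_posOffDiag_symmPart_eq_half_sum [Fintype ι] [DecidableEq ι] (Φ : ι → ι → ℝ)
    (i : ι) :
    ∑ j, posOffDiag (symmPart Φ) i j
      = 1 / 2 * ∑ j ∈ univ.filter (fun j => j ≠ i ∧ 0 < symmPart Φ i j), (Φ i j + Φ j i) := by
  rw [mul_sum, sum_filter]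
  refine sum_congr rfl fun j _ => ?_
  by_cases hij : i = j
  · simp [posOffDiag, hij]
  · simp only [posOffDiag, if_neg hij, Ne.symm hij, ne_eq, not_false_eq_true, true_and]
    unfold symmPart
    split_ifs with hpos
    · rw [max_eq_left hpos.le]; ring
    · rw [max_eq_right (not_lt.mp hpos)]

end SymmetrizedForm

theorem sum_sq_mul_neg {ι : Type*} [Fintype ι] {h c : ι → ℝ} (hsum : ∑ i, h i = 1)
    (hc : ∀ i, c i < 0) : ∑ i, h i ^ 2 * c i < 0 := by
  obtain ⟨i₀, -, hi₀⟩ := exists_ne_zero_of_sum_ne_zero (hsum.trans_ne one_ne_zero)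
  exact sum_neg' (fun i _ => mul_nonpos_of_nonneg_of_nonpos (sq_nonneg _) (hc i).le)
    ⟨i₀, mem_univ _, mul_neg_of_pos_of_neg (by positivity) (hc i₀)⟩

open SymmetrizedForm in
theorem main_theorem_scalar_general {r : ℕ} (Φ : Fin r × Fin r → ℝ)
    (h : Fin r → ℝ) (hpos : ∀ i, 0 ≤ h i) (hsum : ∑ i, h i = 1)
    (hcond : ∀ i : Fin r, ∀ S : Finset (Fin r), i ∉ S →
      Φ (i, i) + (1 / 2) * ∑ j ∈ S, (Φ (i, j) + Φ (j, i)) < 0) :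
    ∑ i : Fin r, ∑ j : Fin r, h i * h j * Φ (i, j) < 0 := by
  set A : Fin r → Fin r → ℝ := fun i j => Φ (i, j)
  have hrow : ∀ i, symmPart A i i + ∑ j, posOffDiag (symmPart A) i j < 0 := fun i => by
    rw [sum_posOffDiag_symmPart_eq_half_sum]
    simpa [symmPart, A] using hcond i _ (by simp)
  calc ∑ i, ∑ j, h i * h j * A i j
      = ∑ i, ∑ j, h i * h j * symmPart A i j := (sum_sum_mul_symmPart A h).symm
    _ ≤ ∑ i, h i ^ 2 * (symmPart A i i + ∑ j, posOffDiag (symmPart A) i j) :=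
        sum_sum_mul_le_of_symm (symmPart_symm A) hpos
    _ < 0 := sum_sq_mul_neg hsum hrow

theorem main_theorem_scalar {r : ℕ} (hr : 2 ≤ r) (Φ : Fin r × Fin r → ℝ)
    (h : Fin r → ℝ) (hpos : ∀ i, 0 ≤ h i) (hsum : ∑ i, h i = 1)
    (hcond : ∀ i : Fin r, ∀ S : Finset (Fin r), i ∉ S →
      Φ (i, i) + (1 / 2) * ∑ j ∈ S, (Φ (i, j) + Φ (j, i)) < 0) :
    ∑ i : Fin r, ∑ j : Fin r, h i * h j * Φ (i, j) < 0 :=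
  main_theorem_scalar_general Φ h hpos hsum hcond
end

section
/- Let n ≥ 1, r ≥ 2, let Φ_{ij} ∈ ℝ^{n×n} be symmetric matrices for i,j ∈ {1,…,r}, and let h : Fin r → ℝ with h_i ≥ 0 and ∑_i h_i = 1. Suppose that for every i and every subset S ⊆ {1,…,r}\{i}, the matrix Φ_{ii} + (1/2)∑_{j∈S}(Φ_{ij} + Φ_{ji}) is negative definite. Then the matrix ∑_{i=1}^r ∑_{j=1}^r h_i h_j Φ_{ij} is negative definite. -/
open Matrix

private lemma quad_sum {n : ℕ} {ι : Type*} (x : Fin n → ℝ) (s : Finset ι)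
    (f : ι → Matrix (Fin n) (Fin n) ℝ) :
    x ⬝ᵥ ((∑ i ∈ s, f i) *ᵥ x) = ∑ i ∈ s, x ⬝ᵥ (f i *ᵥ x) := by
  induction s using Finset.cons_induction with
  | empty => simp [Matrix.zero_mulVec]
  | cons i s hi ih => simp [Matrix.add_mulVec, dotProduct_add, ih]

private lemma key_scalar {r : ℕ} (a : Fin r → Fin r → ℝ) (h : Fin r → ℝ)
    (hpos : ∀ i, 0 ≤ h i) (hsum : ∑ i, h i = 1)
    (hc : ∀ i : Fin r, ∀ S : Finset (Fin r), i ∉ S →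
      a i i + (1 / 2 : ℝ) * ∑ j ∈ S, (a i j + a j i) < 0) :
    ∑ i, ∑ j, h i * h j * a i j < 0 := by
  set b : Fin r → Fin r → ℝ := fun i j => (a i j + a j i) / 2 with hb
  have hbsymm : ∀ i j, b i j = b j i := by intro i j; simp only [hb]; ring
  set m : Fin r → Fin r → ℝ := fun i j => max (b i j) 0 with hmdef
  have hm0 : ∀ i j, (0:ℝ) ≤ m i j := fun i j => le_max_right _ _
  have hbm : ∀ i j, b i j ≤ m i j := fun i j => le_max_left _ _
  have hmsymm : ∀ i j, m i j = m j i := by intro i j; simp only [hmdef, hbsymm i j]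
  -- each "row" quantity is negative
  have hci : ∀ i, a i i + ∑ j ∈ Finset.univ \ {i}, m i j < 0 := by
    intro i
    set S := (Finset.univ \ {i}).filter (fun j => 0 < b i j) with hS
    have hiS : i ∉ S := by simp [hS]
    have h1 := hc i S hiS
    have h2 : (1 / 2 : ℝ) * ∑ j ∈ S, (a i j + a j i) = ∑ j ∈ S, b i j := by
      rw [Finset.mul_sum]
      exact Finset.sum_congr rfl fun j _ => by simp only [hb]; ring
    have h3 : ∑ j ∈ Finset.univ \ {i}, m i j = ∑ j ∈ S, b i j := by
      rw [← Finset.sum_filter_add_sum_filter_not (Finset.univ \ {i})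
        (fun j => 0 < b i j) (m i)]
      have e1 : ∑ j ∈ S, m i j = ∑ j ∈ S, b i j :=
        Finset.sum_congr rfl fun j hj =>
          max_eq_left (le_of_lt (Finset.mem_filter.mp hj).2)
      have e2 : ∑ j ∈ (Finset.univ \ {i}).filter (fun j => ¬ 0 < b i j), m i j = 0 := by
        apply Finset.sum_eq_zero
        intro j hj
        exact max_eq_right (le_of_not_gt (Finset.mem_filter.mp hj).2)
      rw [← hS, e1, e2, add_zero]
    rw [h3]
    linarith [h1, h2.symm ▸ h1]
  -- symmetrize the quadratic form
  have hswap : ∑ i, ∑ j, h i * h j * a j i = ∑ i, ∑ j, h i * h j * a i j := by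
    rw [Finset.sum_comm]
    exact Finset.sum_congr rfl fun i _ => Finset.sum_congr rfl fun j _ => by ring
  have hA : ∑ i, ∑ j, h i * h j * a i j = ∑ i, ∑ j, h i * h j * b i j := by
    have e : ∀ i j : Fin r, h i * h j * b i j
        = (h i * h j * a i j + h i * h j * a j i) / 2 := by
      intro i j; simp only [hb]; ring
    simp only [e, ← Finset.sum_div, Finset.sum_add_distrib, hswap]
    ring
  -- pointwise bound
  set p : Fin r → Fin r → ℝ :=
    fun i j => if i = j then h i ^ 2 * b i i else h i ^ 2 * m i j with hp
  set q : Fin r → Fin r → ℝ :=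
    fun i j => if i = j then h i ^ 2 * b i i else h j ^ 2 * m i j with hq
  have hB : ∑ i, ∑ j, h i * h j * b i j ≤ ∑ i, ∑ j, (p i j + q i j) / 2 := by
    refine Finset.sum_le_sum fun i _ => Finset.sum_le_sum fun j _ => ?_
    by_cases hij : i = j
    · subst hij
      simp only [hp, hq, if_pos rfl]
      apply le_of_eq; ring
    · simp only [hp, hq, if_neg hij]
      have h1 : h i * h j * b i j ≤ h i * h j * m i j :=
        mul_le_mul_of_nonneg_left (hbm i j) (mul_nonneg (hpos i) (hpos j))
      have h2 : 2 * (h i * h j) ≤ h i ^ 2 + h j ^ 2 := by nlinarith [sq_nonneg (h i - h j)]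
      have h3 : h i * h j * m i j ≤ (h i ^ 2 + h j ^ 2) / 2 * m i j := by
        apply mul_le_mul_of_nonneg_right _ (hm0 i j)
        linarith
      calc h i * h j * b i j ≤ (h i ^ 2 + h j ^ 2) / 2 * m i j := le_trans h1 h3
        _ = (h i ^ 2 * m i j + h j ^ 2 * m i j) / 2 := by ring
  have hqp : ∑ i, ∑ j, q i j = ∑ i, ∑ j, p i j := by
    rw [Finset.sum_comm]
    refine Finset.sum_congr rfl fun i _ => Finset.sum_congr rfl fun j _ => ?_
    simp only [hp, hq]
    rcases eq_or_ne i j with hij | hij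
    · subst hij; simp
    · rw [if_neg (Ne.symm hij), if_neg hij, hmsymm j i]
  have hpq : ∑ i, ∑ j, (p i j + q i j) / 2 = ∑ i, ∑ j, p i j := by
    simp only [← Finset.sum_div, Finset.sum_add_distrib, hqp]
    ring
  have hP : ∑ i, ∑ j, p i j = ∑ i, h i ^ 2 * (a i i + ∑ j ∈ Finset.univ \ {i}, m i j) := by
    refine Finset.sum_congr rfl fun i _ => ?_
    have hmem : i ∈ (Finset.univ : Finset (Fin r)) := Finset.mem_univ i
    rw [← Finset.sum_erase_add _ _ hmem]
    have e1 : ∑ j ∈ Finset.univ.erase i, p i j = ∑ j ∈ Finset.univ \ {i}, h i ^ 2 * m i j := by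
      rw [Finset.sdiff_singleton_eq_erase]
      refine Finset.sum_congr rfl fun j hj => ?_
      have : i ≠ j := fun hh => (Finset.mem_erase.mp hj).1 hh.symm
      simp only [hp, if_neg this]
    have e2 : p i i = h i ^ 2 * b i i := by simp [hp]
    have e3 : b i i = a i i := by simp only [hb]; ring
    rw [e1, e2, e3, ← Finset.mul_sum]
    ring
  have hfin : ∑ i, h i ^ 2 * (a i i + ∑ j ∈ Finset.univ \ {i}, m i j) < 0 := by
    have hex : ∃ i, 0 < h i := by
      by_contra hco
      push_neg at hco
      have : ∀ i, h i = 0 := fun i => le_antisymm (hco i) (hpos i)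
      simp [this] at hsum
    obtain ⟨i0, hi0⟩ := hex
    have : ∑ i, h i ^ 2 * (a i i + ∑ j ∈ Finset.univ \ {i}, m i j)
        < ∑ _i : Fin r, (0:ℝ) := by
      refine Finset.sum_lt_sum (fun i _ => ?_) ⟨i0, Finset.mem_univ i0, ?_⟩
      · exact mul_nonpos_of_nonneg_of_nonpos (sq_nonneg _) (le_of_lt (hci i))
      · exact mul_neg_of_pos_of_neg (pow_pos hi0 2) (hci i0)
    simpa using this
  calc ∑ i, ∑ j, h i * h j * a i j = ∑ i, ∑ j, h i * h j * b i j := hA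
    _ ≤ ∑ i, ∑ j, (p i j + q i j) / 2 := hB
    _ = ∑ i, ∑ j, p i j := hpq
    _ = ∑ i, h i ^ 2 * (a i i + ∑ j ∈ Finset.univ \ {i}, m i j) := hP
    _ < 0 := hfin


theorem main_theorem_matrix {n r : ℕ} (hn : 1 ≤ n) (hr : 2 ≤ r)
    (Φ : Fin r × Fin r → Matrix (Fin n) (Fin n) ℝ)
    (hsymm : ∀ p, (Φ p).IsSymm)
    (h : Fin r → ℝ) (hpos : ∀ i, 0 ≤ h i) (hsum : ∑ i, h i = 1)
    (hcond : ∀ i : Fin r, ∀ S : Finset (Fin r), i ∉ S →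
      ∀ x : Fin n → ℝ, x ≠ 0 →
        x ⬝ᵥ ((Φ (i, i) + (1 / 2 : ℝ) • ∑ j ∈ S, (Φ (i, j) + Φ (j, i))) *ᵥ x) < 0) :
    ∀ x : Fin n → ℝ, x ≠ 0 →
      x ⬝ᵥ ((∑ i : Fin r, ∑ j : Fin r, (h i * h j) • Φ (i, j)) *ᵥ x) < 0 := by
  intro x hx
  set a : Fin r → Fin r → ℝ := fun i j => x ⬝ᵥ (Φ (i, j) *ᵥ x) with ha
  have hgoal : x ⬝ᵥ ((∑ i : Fin r, ∑ j : Fin r, (h i * h j) • Φ (i, j)) *ᵥ x)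
      = ∑ i, ∑ j, h i * h j * a i j := by
    rw [quad_sum]
    refine Finset.sum_congr rfl fun i _ => ?_
    rw [quad_sum]
    refine Finset.sum_congr rfl fun j _ => ?_
    rw [Matrix.smul_mulVec, dotProduct_smul, smul_eq_mul]
  rw [hgoal]
  apply key_scalar a h hpos hsum
  intro i S hiS
  have := hcond i S hiS x hx
  have econv : x ⬝ᵥ ((Φ (i, i) + (1 / 2 : ℝ) • ∑ j ∈ S, (Φ (i, j) + Φ (j, i))) *ᵥ x)
      = a i i + (1 / 2 : ℝ) * ∑ j ∈ S, (a i j + a j i) := by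
    rw [Matrix.add_mulVec, dotProduct_add, Matrix.smul_mulVec, dotProduct_smul,
      smul_eq_mul, quad_sum]
    congr 1
    congr 1
    exact Finset.sum_congr rfl fun j _ => by
      rw [Matrix.add_mulVec, dotProduct_add]
  rw [econv] at this
  exact this
end

section
/- Let r ≥ 2 and Φ : Fin r × Fin r → ℝ. If Φ_{ii} < 0 for all i and (2/(r-1))Φ_{ii} + Φ_{ij} + Φ_{ji} < 0 for all i ≠ j, then for every i and every subset S ⊆ {1,…,r}\{i}, Φ_{ii} + (1/2)∑_{j∈S}(Φ_{ij} + Φ_{ji}) < 0. -/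
/-!
Put `c = (2/(r-1)) Φᵢᵢ`. Summing `c + (Φᵢⱼ + Φⱼᵢ) < 0` over `j ∈ S` and halving gives
`½ ∑ⱼ (Φᵢⱼ + Φⱼᵢ) < -|S| c / 2`, hence `Φᵢᵢ + ½ ∑ⱼ (Φᵢⱼ + Φⱼᵢ) < Φᵢᵢ (1 - |S|/(r-1)) ≤ 0`,
because `Φᵢᵢ < 0` and `|S| ≤ r - 1` when `i ∉ S`.
-/

theorem Finset.add_half_sum_neg_of_forall_two_div_mul_add_neg {ι K : Type*} [Field K] [LinearOrder K]
    [IsStrictOrderedRing K] (S : Finset ι) (a : ι → K) {n d : K} (hcard : (S.card : K) ≤ n) (hd : d < 0)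
    (ha : ∀ j ∈ S, 2 / n * d + a j < 0) :
    d + 1 / 2 * ∑ j ∈ S, a j < 0 := by
  rcases S.eq_empty_or_nonempty with rfl | hS
  · simpa using hd
  have hn : 0 < n := lt_of_lt_of_le (by exact_mod_cast hS.card_pos) hcard
  have hsum : (S.card : K) * (2 / n * d) + ∑ j ∈ S, a j < 0 := by
    simpa only [sum_add_distrib, sum_const, nsmul_eq_mul] using sum_neg ha hS
  have hfrac : d * (1 - S.card / n) ≤ 0 :=
    mul_nonpos_of_nonpos_of_nonneg hd.le (sub_nonneg.mpr ((div_le_one hn).mpr hcard))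
  calc d + 1 / 2 * ∑ j ∈ S, a j
      < d - 1 / 2 * ((S.card : K) * (2 / n * d)) := by linarith
    _ = d * (1 - S.card / n) := by field_simp
    _ ≤ 0 := hfrac

theorem tuan_implies_main_scalar_general {r : ℕ} (Φ : Fin r × Fin r → ℝ)
    (hdiag : ∀ i, Φ (i, i) < 0)
    (hoff : ∀ i j, i ≠ j → (2 / ((r : ℝ) - 1)) * Φ (i, i) + Φ (i, j) + Φ (j, i) < 0) :
    ∀ i : Fin r, ∀ S : Finset (Fin r), i ∉ S →
      Φ (i, i) + (1 / 2) * ∑ j ∈ S, (Φ (i, j) + Φ (j, i)) < 0 := by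
  intro i S hiS
  have hcard : (S.card : ℝ) ≤ r - 1 := by
    have hlt : S.card + 1 ≤ r := by simpa using Finset.card_lt_univ_of_notMem hiS
    rw [le_sub_iff_add_le]
    exact_mod_cast hlt
  refine S.add_half_sum_neg_of_forall_two_div_mul_add_neg _ hcard (hdiag i) fun j hj => ?_
  rw [← add_assoc]
  exact hoff i j fun h => hiS (h ▸ hj)

theorem tuan_implies_main_scalar {r : ℕ} (hr : 2 ≤ r) (Φ : Fin r × Fin r → ℝ)
    (hdiag : ∀ i, Φ (i, i) < 0)
    (hoff : ∀ i j, i ≠ j → (2 / ((r : ℝ) - 1)) * Φ (i, i) + Φ (i, j) + Φ (j, i) < 0) :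
    ∀ i : Fin r, ∀ S : Finset (Fin r), i ∉ S →
      Φ (i, i) + (1 / 2) * ∑ j ∈ S, (Φ (i, j) + Φ (j, i)) < 0 :=
  tuan_implies_main_scalar_general Φ hdiag hoff
end

section
/- Let r ≥ 2 and let Φ_{ij} ∈ ℝ^{n×n} be symmetric matrices. If Φ_{ii} is negative definite for all i and (2/(r-1))Φ_{ii} + Φ_{ij} + Φ_{ji} is negative definite for all i ≠ j, then for every i and every subset S ⊆ {1,…,r}\{i}, the matrix Φ_{ii} + (1/2)∑_{j∈S}(Φ_{ij} + Φ_{ji}) is negative definite. -/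
open Matrix

/-- For nonempty `S` the left side is `(1 - #S / m) d + ½ ∑ⱼ (2 d / m + cⱼ)`,
a nonpositive term plus a negative one. -/
lemma add_half_sum_neg_of_card_le {ι : Type*} {S : Finset ι} {m d : ℝ} {c : ι → ℝ}
    (hd : d < 0) (hS : (S.card : ℝ) ≤ m) (hc : ∀ j ∈ S, 2 / m * d + c j < 0) :
    d + 1 / 2 * ∑ j ∈ S, c j < 0 := by
  rcases S.eq_empty_or_nonempty with rfl | hne
  · simpa using hd
  have hm : 0 < m := lt_of_lt_of_le (by exact_mod_cast hne.card_pos) hS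
  have hsum : ∑ j ∈ S, c j < S.card * (-(2 / m * d)) := by
    rw [← nsmul_eq_mul, ← Finset.sum_const]
    exact Finset.sum_lt_sum_of_nonempty hne fun j hj => by linarith [hc j hj]
  have hratio : (S.card : ℝ) * (2 / m * d) = 2 * d * (S.card / m) := by ring
  have hle : (S.card : ℝ) / m ≤ 1 := (div_le_one hm).mpr hS
  nlinarith

lemma card_le_sub_one_of_notMem {r : ℕ} {S : Finset (Fin r)} {i : Fin r} (hi : i ∉ S) :
    (S.card : ℝ) ≤ r - 1 := by
  have h : S.card + 1 ≤ r := by simpa using Finset.card_lt_univ_of_notMem hi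
  have : ((S.card + 1 : ℕ) : ℝ) ≤ r := by exact_mod_cast h
  push_cast at this
  linarith

theorem tuan_implies_main_matrix_general {n r : ℕ}
    (Φ : Fin r × Fin r → Matrix (Fin n) (Fin n) ℝ)
    (hdiag : ∀ i, ∀ x : Fin n → ℝ, x ≠ 0 → x ⬝ᵥ (Φ (i, i) *ᵥ x) < 0)
    (hoff : ∀ i j, i ≠ j → ∀ x : Fin n → ℝ, x ≠ 0 →
      x ⬝ᵥ (((2 / ((r : ℝ) - 1)) • Φ (i, i) + Φ (i, j) + Φ (j, i)) *ᵥ x) < 0) :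
    ∀ i : Fin r, ∀ S : Finset (Fin r), i ∉ S →
      ∀ x : Fin n → ℝ, x ≠ 0 →
        x ⬝ᵥ ((Φ (i, i) + (1 / 2 : ℝ) • ∑ j ∈ S, (Φ (i, j) + Φ (j, i))) *ᵥ x) < 0 := by
  intro i S hiS x hx
  simp only [add_mulVec, smul_mulVec, sum_mulVec, dotProduct_add, dotProduct_smul,
    dotProduct_sum, smul_eq_mul]
  refine add_half_sum_neg_of_card_le (hdiag i x hx) (card_le_sub_one_of_notMem hiS)
    fun j hj => ?_
  have hij : i ≠ j := fun h => hiS (h ▸ hj)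
  simpa only [add_mulVec, smul_mulVec, dotProduct_add, dotProduct_smul, smul_eq_mul,
    add_assoc] using hoff i j hij x hx

theorem tuan_implies_main_matrix {n r : ℕ} (hr : 2 ≤ r)
    (Φ : Fin r × Fin r → Matrix (Fin n) (Fin n) ℝ)
    (hsymm : ∀ p, (Φ p).IsSymm)
    (hdiag : ∀ i, ∀ x : Fin n → ℝ, x ≠ 0 → x ⬝ᵥ (Φ (i, i) *ᵥ x) < 0)
    (hoff : ∀ i j, i ≠ j → ∀ x : Fin n → ℝ, x ≠ 0 →
      x ⬝ᵥ (((2 / ((r : ℝ) - 1)) • Φ (i, i) + Φ (i, j) + Φ (j, i)) *ᵥ x) < 0) :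
    ∀ i : Fin r, ∀ S : Finset (Fin r), i ∉ S →
      ∀ x : Fin n → ℝ, x ≠ 0 →
        x ⬝ᵥ ((Φ (i, i) + (1 / 2 : ℝ) • ∑ j ∈ S, (Φ (i, j) + Φ (j, i))) *ᵥ x) < 0 :=
  tuan_implies_main_matrix_general Φ hdiag hoff
end

section
/- Let r ≥ 2, Φ : Fin r × Fin r → ℝ, and h : Fin r → ℝ with h_i ≥ 0 and ∑ h_i = 1. Then ∑_i ∑_j h_i h_j Φ_{ij} ≤ ∑_i h_i² ( Φ_{ii} + (1/2)∑_{j≠i} max(Φ_{ij} + Φ_{ji}, 0) ). -/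
open Finset

theorem final_bound {r : ℕ} (hr : 2 ≤ r) (Φ : Fin r × Fin r → ℝ)
    (h : Fin r → ℝ) (hpos : ∀ i, 0 ≤ h i) (hsum : ∑ i, h i = 1) :
    ∑ i : Fin r, ∑ j : Fin r, h i * h j * Φ (i, j) ≤
      ∑ i : Fin r, h i ^ 2 *
        (Φ (i, i) + (1 / 2) * ∑ j ∈ Finset.univ.filter (· ≠ i),
          max (Φ (i, j) + Φ (j, i)) 0) := by
  set M : Fin r → Fin r → ℝ := fun i j => max (Φ (i, j) + Φ (j, i)) 0 with hM
  have hMnn : ∀ i j, 0 ≤ M i j := fun i j => le_max_right _ _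
  have hMsymm : ∀ i j, M i j = M j i := fun i j => by simp [hM, add_comm]
  have swap : ∀ g : Fin r → Fin r → ℝ,
      ∑ i, ∑ j ∈ Finset.univ.filter (· ≠ i), g i j
        = ∑ i, ∑ j ∈ Finset.univ.filter (· ≠ i), g j i := by
    intro g
    rw [Finset.sum_comm' (s' := fun j => Finset.univ.filter (· ≠ j))
      (t' := Finset.univ) (fun i j => by simp [ne_comm, eq_comm])]
  have key : ∑ i, ∑ j ∈ Finset.univ.filter (· ≠ i), h i * h j * Φ (i, j)
      ≤ (1 / 2) * ∑ i, ∑ j ∈ Finset.univ.filter (· ≠ i), h i ^ 2 * M i j := by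
    have e1 : (2 : ℝ) * ∑ i, ∑ j ∈ Finset.univ.filter (· ≠ i), h i * h j * Φ (i, j)
        = ∑ i, ∑ j ∈ Finset.univ.filter (· ≠ i),
            (h i * h j * Φ (i, j) + h j * h i * Φ (j, i)) := by
      rw [two_mul]
      nth_rewrite 2 [swap (fun i j => h i * h j * Φ (i, j))]
      rw [← Finset.sum_add_distrib]
      congr 1; ext i
      rw [← Finset.sum_add_distrib]
    have e2 : ∑ i, ∑ j ∈ Finset.univ.filter (· ≠ i), h j ^ 2 * M i j
        = ∑ i, ∑ j ∈ Finset.univ.filter (· ≠ i), h i ^ 2 * M i j := by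
      rw [swap (fun i j => h j ^ 2 * M i j)]
      exact Finset.sum_congr rfl fun i _ => Finset.sum_congr rfl fun j _ => by
        rw [hMsymm]
    have e3 : ∑ i, ∑ j ∈ Finset.univ.filter (· ≠ i),
            (h i * h j * Φ (i, j) + h j * h i * Φ (j, i))
        ≤ ∑ i, ∑ j ∈ Finset.univ.filter (· ≠ i),
            (h i ^ 2 + h j ^ 2) / 2 * M i j := by
      refine Finset.sum_le_sum fun i _ => Finset.sum_le_sum fun j _ => ?_
      have h1 : h i * h j * Φ (i, j) + h j * h i * Φ (j, i)
          = h i * h j * (Φ (i, j) + Φ (j, i)) := by ring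
      have h2 : h i * h j * (Φ (i, j) + Φ (j, i)) ≤ h i * h j * M i j :=
        mul_le_mul_of_nonneg_left (le_max_left _ _)
          (mul_nonneg (hpos i) (hpos j))
      have h3 : h i * h j ≤ (h i ^ 2 + h j ^ 2) / 2 := by nlinarith [sq_nonneg (h i - h j)]
      have h4 : h i * h j * M i j ≤ (h i ^ 2 + h j ^ 2) / 2 * M i j :=
        mul_le_mul_of_nonneg_right h3 (hMnn i j)
      linarith
    have e4 : ∑ i, ∑ j ∈ Finset.univ.filter (· ≠ i),
            (h i ^ 2 + h j ^ 2) / 2 * M i j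
        = ∑ i, ∑ j ∈ Finset.univ.filter (· ≠ i), h i ^ 2 * M i j := by
      have : ∀ i j, (h i ^ 2 + h j ^ 2) / 2 * M i j
          = (h i ^ 2 * M i j + h j ^ 2 * M i j) / 2 := fun i j => by ring
      simp_rw [this, ← Finset.sum_div, Finset.sum_add_distrib]
      rw [e2]; ring
    linarith [e1, e3.trans_eq e4]
  calc ∑ i : Fin r, ∑ j : Fin r, h i * h j * Φ (i, j)
      = ∑ i : Fin r, (h i * h i * Φ (i, i)
          + ∑ j ∈ Finset.univ.filter (· ≠ i), h i * h j * Φ (i, j)) := by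
        refine Finset.sum_congr rfl fun i _ => ?_
        rw [Finset.filter_ne']
        exact (Finset.add_sum_erase _ (fun j => h i * h j * Φ (i, j))
          (Finset.mem_univ i)).symm
    _ = ∑ i : Fin r, h i ^ 2 * Φ (i, i)
          + ∑ i, ∑ j ∈ Finset.univ.filter (· ≠ i), h i * h j * Φ (i, j) := by
        rw [Finset.sum_add_distrib]; congr 1; exact Finset.sum_congr rfl fun i _ => by ring
    _ ≤ ∑ i : Fin r, h i ^ 2 * Φ (i, i)
          + (1 / 2) * ∑ i, ∑ j ∈ Finset.univ.filter (· ≠ i), h i ^ 2 * M i j := by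
        linarith [key]
    _ = ∑ i : Fin r, h i ^ 2 * (Φ (i, i) + (1 / 2) * ∑ j ∈ Finset.univ.filter (· ≠ i), M i j) := by
        rw [Finset.mul_sum, ← Finset.sum_add_distrib]
        refine Finset.sum_congr rfl fun i _ => ?_
        rw [mul_add]
        congr 1
        rw [Finset.mul_sum, Finset.mul_sum, Finset.mul_sum]
        exact Finset.sum_congr rfl fun j _ => by ring
end
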